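/- Let T be a commutative ring, and suppose T' → ∏_{i} T_i is a ring homomorphism between T-algebras that becomes an isomorphism after tensoring with a field L over a subring. If m is a maximal ideal of T' such that the induced residual data is supported on a single factor, then the localization T'_m ⊗ L ≅ (T_i)_{m_i} ⊗ L for the unique factor T_i through which m factors. -/

import Mathlib

open scoped TensorProduct

/-!
Localizing at `M ⊆ A` is base change along `A → A_M`, which commutes with finite products
of algebras; and if `L → L ⊗[A] B` is bijective, then
`L ⊗[A] B_M ≅ (L ⊗[A] B) ⊗[A] A_M ≅ L ⊗[A] A_M`.
-/

section

variable {R L B : Type*} [CommRing R] [CommRing L] [CommRing B] [Algebra R L] [Algebra R B]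

noncomputable def tensorTensorEquivOfBijective
    (h : Function.Bijective (algebraMap L (L ⊗[R] B))) (C : Type*) [CommRing C] [Algebra R C] :
    L ⊗[R] (B ⊗[R] C) ≃ₐ[L] L ⊗[R] C :=
  (Algebra.TensorProduct.assoc R R L L B C).symm.trans <|
    Algebra.TensorProduct.congr (AlgEquiv.ofBijective (Algebra.ofId L _) h).symm AlgEquiv.refl

noncomputable def tensorLocalizationEquivOfBijective
    (h : Function.Bijective (algebraMap L (L ⊗[R] B))) (M : Submonoid R) :
    L ⊗[R] Localization M ≃ₐ[L] L ⊗[R] Localization (Algebra.algebraMapSubmonoid B M) :=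
  (tensorTensorEquivOfBijective h _).symm.trans <|
    Algebra.TensorProduct.congr AlgEquiv.refl
      ((Localization.tensorLeftAlgEquiv M B).restrictScalars R)

end

noncomputable def Localization.prodAlgEquiv {R B₁ B₂ : Type*} [CommRing R] [CommRing B₁]
    [CommRing B₂] [Algebra R B₁] [Algebra R B₂] (M : Submonoid R) :
    Localization (Algebra.algebraMapSubmonoid (B₁ × B₂) M) ≃ₐ[Localization M]
      Localization (Algebra.algebraMapSubmonoid B₁ M) ×
        Localization (Algebra.algebraMapSubmonoid B₂ M) :=
  (Localization.tensorRightAlgEquiv M _).symm.trans <|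
    (Algebra.TensorProduct.prodRight R _ _ B₁ B₂).trans <|
      (Localization.tensorRightAlgEquiv M B₁).prodCongr (Localization.tensorRightAlgEquiv M B₂)

theorem stmt13_general (A B₁ B₂ : Type*) [CommRing A] [CommRing B₁] [CommRing B₂]
    [Algebra A B₁] [Algebra A B₂]
    (T : Submonoid A)
    (hiso : Function.Bijective
      (algebraMap (Localization T) (Localization T ⊗[A] (B₁ × B₂))))
    (m : Ideal A) [m.IsMaximal] :
    Nonempty ((Localization T ⊗[A] Localization m.primeCompl) ≃ₐ[Localization T]
        (Localization T ⊗[A]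
          Localization (Submonoid.map (algebraMap A (B₁ × B₂)).toMonoidHom
            m.primeCompl))) ∧
    Nonempty ((Localization (Submonoid.map (algebraMap A (B₁ × B₂)).toMonoidHom
          m.primeCompl)) ≃+*
        (Localization (Submonoid.map (algebraMap A B₁).toMonoidHom m.primeCompl)) ×
        (Localization (Submonoid.map (algebraMap A B₂).toMonoidHom m.primeCompl))) :=
  ⟨⟨tensorLocalizationEquivOfBijective hiso _⟩,
    ⟨(Localization.prodAlgEquiv _).toRingEquiv⟩⟩

/-- Abstract form of the Hecke-algebra decomposition: let `φ : A → B₁ × B₂` be an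
(injective) map of Noetherian rings which becomes an isomorphism after tensoring with
a localization `L = T⁻¹A`, and let `m` be a maximal ideal of `A`. Then the localized
map `A_m → (B₁ × B₂)_m` is an isomorphism after `⊗ L`, and the localization
`(B₁ × B₂)_m` decomposes as the product of the localizations `(B₁)_m × (B₂)_m`. -/
theorem stmt13 (A B₁ B₂ : Type*) [CommRing A] [CommRing B₁] [CommRing B₂]
    [IsNoetherianRing A] [IsNoetherianRing B₁] [IsNoetherianRing B₂]
    [Algebra A B₁] [Algebra A B₂]
    (T : Submonoid A)
    (hinj : Function.Injective (algebraMap A (B₁ × B₂)))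
    (hiso : Function.Bijective
      (algebraMap (Localization T) (Localization T ⊗[A] (B₁ × B₂))))
    (m : Ideal A) [m.IsMaximal] :
    Nonempty ((Localization T ⊗[A] Localization m.primeCompl) ≃ₐ[Localization T]
        (Localization T ⊗[A]
          Localization (Submonoid.map (algebraMap A (B₁ × B₂)).toMonoidHom
            m.primeCompl))) ∧
    Nonempty ((Localization (Submonoid.map (algebraMap A (B₁ × B₂)).toMonoidHom
          m.primeCompl)) ≃+*
        (Localization (Submonoid.map (algebraMap A B₁).toMonoidHom m.primeCompl)) ×
        (Localization (Submonoid.map (algebraMap A B₂).toMonoidHom m.primeCompl))) :=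
  stmt13_general A B₁ B₂ T hiso m
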